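/- The one-parameter family of transport maps is closed under composition: for all γ, δ ∈ (0,6), the value F⁻¹_γ(δ) lies in (0,6), and for every x ∈ [0,6] one has F⁻¹_γ(F⁻¹_δ(x)) = F⁻¹_{F⁻¹_γ(δ)}(x). -/

import Mathlib

/-!
Multiplying numerator and denominator by 2 gives `F⁻¹_γ(x) = 6γx / (γx + (6−γ)(6−x))`, which is
symmetric in `γ` and `x`. Composing two such maps gives
`F⁻¹_γ(F⁻¹_δ(x)) = 6γδx / (γδx + (6−γ)(6−δ)(6−x))`, symmetric in `γ, δ, x`; hence
`F⁻¹_γ(F⁻¹_δ(x)) = F⁻¹_x(F⁻¹_γ(δ)) = F⁻¹_{F⁻¹_γ(δ)}(x)`.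
-/

/-- The transport map `F⁻¹_γ(x) = 3xγ / (x(γ−3) + 3(6−γ))`. -/
noncomputable def Finv (γ x : ℝ) : ℝ := 3 * x * γ / (x * (γ - 3) + 3 * (6 - γ))

open Set

theorem Finv_eq (γ x : ℝ) : Finv γ x = 6 * γ * x / (γ * x + (6 - γ) * (6 - x)) := by
  rw [Finv, ← mul_div_mul_left _ _ (two_ne_zero' ℝ)]
  ring

theorem Finv_comm (γ x : ℝ) : Finv γ x = Finv x γ := by
  simp only [Finv_eq]
  ring

theorem Finv_Finv {γ δ x : ℝ} (h : δ * x + (6 - δ) * (6 - x) ≠ 0) :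
    Finv γ (Finv δ x) =
      6 * γ * δ * x / (γ * δ * x + (6 - γ) * (6 - δ) * (6 - x)) := by
  rw [Finv_eq γ, Finv_eq δ]
  field_simp
  ring

theorem Finv_denom_pos {γ x : ℝ} (hγ : γ ∈ Ioo 0 6) (hx : x ∈ Icc 0 6) :
    0 < γ * x + (6 - γ) * (6 - x) := by
  obtain ⟨hγ₀, hγ₆⟩ := hγ
  obtain ⟨hx₀, hx₆⟩ := hx
  rcases hx₆.lt_or_eq with hx₆ | rfl
  · exact add_pos_of_nonneg_of_pos (by positivity) (mul_pos (by linarith) (by linarith))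
  · nlinarith

theorem Finv_mem_Ioo {γ x : ℝ} (hγ : γ ∈ Ioo 0 6) (hx : x ∈ Ioo 0 6) : Finv γ x ∈ Ioo 0 6 := by
  have hD := Finv_denom_pos hγ (Ioo_subset_Icc_self hx)
  obtain ⟨hγ₀, hγ₆⟩ := hγ
  obtain ⟨hx₀, hx₆⟩ := hx
  rw [Finv_eq]
  constructor
  · positivity
  · rw [div_lt_iff₀ hD]
    nlinarith [mul_pos (sub_pos.2 hγ₆) (sub_pos.2 hx₆)]

theorem transport_map_closed_under_composition :
    ∀ γ ∈ Set.Ioo (0 : ℝ) 6, ∀ δ ∈ Set.Ioo (0 : ℝ) 6,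
      Finv γ δ ∈ Set.Ioo (0 : ℝ) 6 ∧
      ∀ x ∈ Set.Icc (0 : ℝ) 6, Finv γ (Finv δ x) = Finv (Finv γ δ) x := by
  intro γ hγ δ hδ
  refine ⟨Finv_mem_Ioo hγ hδ, fun x hx => ?_⟩
  have hδx := (Finv_denom_pos hδ hx).ne'
  have hγδ := (Finv_denom_pos hγ (Ioo_subset_Icc_self hδ)).ne'
  rw [Finv_Finv hδx, Finv_comm _ x, Finv_Finv hγδ]
  ring
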